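/- Let A be an associative unital ring with a nilpotent two-sided ideal 𝔞 such that gr_𝔞 A is commutative, let s ∈ A, let A_s be the Ore ring of fractions of A at the denominator set {s^j : j ∈ ℕ}, with canonical ring homomorphism λ : A → A_s, let Ā := A/𝔞 with s̄ the image of s, and let Ā_{s̄} be the localization of Ā at the powers of s̄. Then for any a ∈ A, with image ā ∈ Ā: λ(a) is invertible in A_s if and only if the image of ā in Ā_{s̄} is invertible. -/
import Mathlib


/-- The `n`-th power of a subset `I` of a ring, as an additive subgroup:
`I^0 = A`, and `I^{n+1}` is the additive subgroup generated by the products `a * b`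
with `a ∈ I` and `b ∈ I^n`. -/
def setPow {A : Type} [Ring A] (I : Set A) : ℕ → AddSubgroup A
  | 0 => ⊤
  | n + 1 => AddSubgroup.closure {x | ∃ a ∈ I, ∃ b ∈ setPow I n, x = a * b}

section Aux
variable {A : Type} [Ring A] (I : TwoSidedIdeal A)

lemma setPow_mul_left {n : ℕ} {x : A} (hx : x ∈ setPow (I : Set A) n) (c : A) :
    c * x ∈ setPow (I : Set A) n := by
  cases n with
  | zero => trivial
  | succ n =>
    refine AddSubgroup.closure_induction (fun y hy => ?_) ?_ ?_ ?_ hx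
    · obtain ⟨a, ha, b, hb, rfl⟩ := hy
      rw [← mul_assoc]
      exact AddSubgroup.subset_closure ⟨c * a, I.mul_mem_left c a ha, b, hb, rfl⟩
    · rw [mul_zero]; exact zero_mem _
    · intro y z _ _ hy hz
      rw [mul_add]; exact add_mem hy hz
    · intro y _ hy
      rw [mul_neg]; exact neg_mem hy

lemma setPow_mul_right {n : ℕ} {x : A} (hx : x ∈ setPow (I : Set A) n) (c : A) :
    x * c ∈ setPow (I : Set A) n := by
  induction n generalizing x c with
  | zero => trivial
  | succ n ih =>
    refine AddSubgroup.closure_induction (fun y hy => ?_) ?_ ?_ ?_ hx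
    · obtain ⟨a, ha, b, hb, rfl⟩ := hy
      rw [mul_assoc]
      exact AddSubgroup.subset_closure ⟨a, ha, b * c, ih hb c, rfl⟩
    · rw [zero_mul]; exact zero_mem _
    · intro y z _ _ hy hz
      rw [add_mul]; exact add_mem hy hz
    · intro y _ hy
      rw [neg_mul]; exact neg_mem hy

lemma setPow_succ_le (n : ℕ) : setPow (I : Set A) (n + 1) ≤ setPow (I : Set A) n := by
  intro x hx
  refine AddSubgroup.closure_induction (fun y hy => ?_) (zero_mem _)
    (fun y z _ _ hy hz => add_mem hy hz) (fun y _ hy => neg_mem hy) hx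
  obtain ⟨a, ha, b, hb, rfl⟩ := hy
  exact setPow_mul_left I hb a

lemma setPow_antitone {m n : ℕ} (h : m ≤ n) :
    setPow (I : Set A) n ≤ setPow (I : Set A) m := by
  induction n with
  | zero => have : m = 0 := by omega
            subst this; exact le_rfl
  | succ n ih =>
    rcases Nat.eq_or_lt_of_le h with rfl | h'
    · exact le_rfl
    · exact (setPow_succ_le I n).trans (ih (by omega))

lemma mem_setPow_one {z : A} (hz : z ∈ I) : z ∈ setPow (I : Set A) 1 :=
  AddSubgroup.subset_closure ⟨z, hz, 1, trivial, (mul_one z).symm⟩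

lemma setPow_mul_mem {i j : ℕ} {x y : A} (hx : x ∈ setPow (I : Set A) i)
    (hy : y ∈ setPow (I : Set A) j) : x * y ∈ setPow (I : Set A) (i + j) := by
  induction i generalizing x with
  | zero => simpa using setPow_mul_left I hy x
  | succ i ih =>
    have he : i + 1 + j = (i + j) + 1 := by omega
    rw [he]
    refine AddSubgroup.closure_induction (fun w hw => ?_) ?_ ?_ ?_ hx
    · obtain ⟨a, ha, b, hb, rfl⟩ := hw
      rw [mul_assoc]
      exact AddSubgroup.subset_closure ⟨a, ha, b * y, ih hb, rfl⟩
    · rw [zero_mul]; exact zero_mem _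
    · intro w z _ _ hw hz
      rw [add_mul]; exact add_mem hw hz
    · intro w _ hw
      rw [neg_mul]; exact neg_mem hw

end Aux


/-- Let `A` be a ring with a nilpotent two-sided ideal `𝔞` such that `gr_𝔞 A` is
commutative, `s ∈ A`, let `A_s` (here `B`, with canonical map `l`) be the Ore ring of fractions
at the powers of `s`, let `Ā := A/𝔞` (here `Abar`, with quotient map `p`), and let `Ā_{s̄}`
(here `L`) be the localization of `Ā` at the powers of `s̄ = p s`.  Then for any `a ∈ A`:
`λ(a)` is invertible in `A_s` if and only if the image of `ā` in `Ā_{s̄}` is invertible. -/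
theorem statement5
    (A : Type) [Ring A] (I : TwoSidedIdeal A)
    (hnil : ∃ N : ℕ, setPow (I : Set A) N = ⊥)
    (hcomm : ∀ (i j : ℕ) (x y : A), x ∈ setPow (I : Set A) i → y ∈ setPow (I : Set A) j →
      x * y - y * x ∈ setPow (I : Set A) (i + j + 1))
    (s : A)
    -- `B`, together with `l`, is the Ore ring of fractions `A_s`:
    (B : Type) [Ring B] (l : A →+* B)
    (hunit : IsUnit (l s))
    (hfrac : ∀ b : B, ∃ (a : A) (n : ℕ), b * l (s ^ n) = l a)
    (hlker : ∀ a : A, l a = 0 ↔ ∃ n : ℕ, a * s ^ n = 0)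
    -- `Abar`, together with the surjection `p` with kernel `𝔞`, is `Ā := A/𝔞`:
    (Abar : Type) [CommRing Abar] (p : A →+* Abar)
    (hpsurj : Function.Surjective p)
    (hpker : ∀ a : A, p a = 0 ↔ a ∈ I)
    -- `L` is the localization `Ā_{s̄}` of `Ā` at the powers of `s̄ := p s`:
    (L : Type) [CommRing L] [Algebra Abar L] [IsLocalization.Away (p s) L] :
    ∀ a : A, IsUnit (l a) ↔ IsUnit (algebraMap Abar L (p a)) := by
  obtain ⟨N0, hN0⟩ := hnil
  set N := N0 + 1 with hNdef
  have hN : setPow (I : Set A) N = ⊥ :=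
    le_bot_iff.mp (hN0 ▸ setPow_succ_le I N0)
  set t : Bˣ := hunit.unit with htdef
  have ht : (t : B) = l s := hunit.unit_spec
  have htp : ∀ n : ℕ, ((t : B)) ^ n = l (s ^ n) := fun n => by rw [ht, ← map_pow]
  -- key commutation lemma
  have K1aux : ∀ (k j : ℕ), N ≤ j + k → ∀ z ∈ setPow (I : Set A) j,
      ∃ (n : ℕ) (w : A), w ∈ setPow (I : Set A) j ∧
        ((↑t⁻¹ : B) * l z) * (t : B) ^ n = l w := by
    intro k
    induction k with
    | zero =>
      intro j hj z hz
      have hz0 : z = 0 := by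
        have h := setPow_antitone I (by omega : N ≤ j) hz
        rw [hN] at h
        simpa using h
      exact ⟨0, 0, zero_mem _, by simp [hz0]⟩
    | succ k ih =>
      intro j hj z hz
      set w0 := z * s - s * z with hw0def
      have hw0 : w0 ∈ setPow (I : Set A) (j + 1) := by
        have h := hcomm j 0 z s hz trivial
        simpa using h
      obtain ⟨n, w1, hw1, heq⟩ := ih (j + 1) (by omega) w0 hw0
      refine ⟨n + 1, z * s ^ n + w1,
        add_mem (setPow_mul_right I hz _) (setPow_succ_le I j hw1), ?_⟩
      have key : (↑t⁻¹ : B) * l z * ↑t = l z + ↑t⁻¹ * l w0 := by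
        have h1 : l z * (↑t : B) = ↑t * l z + l w0 := by
          rw [ht, hw0def, map_sub, map_mul, map_mul]; noncomm_ring
        calc (↑t⁻¹ : B) * l z * ↑t = ↑t⁻¹ * (l z * ↑t) := by rw [mul_assoc]
          _ = ↑t⁻¹ * (↑t * l z + l w0) := by rw [h1]
          _ = (↑t⁻¹ * ↑t) * l z + ↑t⁻¹ * l w0 := by rw [mul_add, mul_assoc]
          _ = l z + ↑t⁻¹ * l w0 := by rw [t.inv_mul, one_mul]
      calc ((↑t⁻¹ : B) * l z) * (t : B) ^ (n + 1)
          = (((↑t⁻¹ : B) * l z) * ↑t) * (t : B) ^ n := by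
            rw [pow_succ', ← mul_assoc]
        _ = (l z + ↑t⁻¹ * l w0) * (t : B) ^ n := by rw [key]
        _ = l z * (t : B) ^ n + ((↑t⁻¹ : B) * l w0) * (t : B) ^ n := by
            rw [add_mul, mul_assoc]
        _ = l z * (t : B) ^ n + l w1 := by rw [heq]
        _ = l (z * s ^ n) + l w1 := by rw [htp, ← map_mul]
        _ = l (z * s ^ n + w1) := (map_add _ _ _).symm
  have K1 : ∀ (j : ℕ) (z : A), z ∈ setPow (I : Set A) j →
      ∃ (n : ℕ) (w : A), w ∈ setPow (I : Set A) j ∧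
        ((↑t⁻¹ : B) * l z) * (t : B) ^ n = l w :=
    fun j z hz => K1aux N j (by omega) z hz
  have K2 : ∀ (m j : ℕ) (z : A), z ∈ setPow (I : Set A) j →
      ∃ (n : ℕ) (w : A), w ∈ setPow (I : Set A) j ∧
        ((↑(t⁻¹ ^ m) : B) * l z) * (t : B) ^ n = l w := by
    intro m
    induction m with
    | zero => intro j z hz; exact ⟨0, z, hz, by simp⟩
    | succ m ih =>
      intro j z hz
      obtain ⟨n, w, hw, heq⟩ := K1 j z hz
      obtain ⟨n', w', hw', heq'⟩ := ih j w hw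
      refine ⟨n + n', w', hw', ?_⟩
      calc ((↑(t⁻¹ ^ (m + 1)) : B) * l z) * (t : B) ^ (n + n')
          = (↑(t⁻¹ ^ m) : B) * (((↑t⁻¹ : B) * l z) * (t : B) ^ n) * (t : B) ^ n' := by
            rw [pow_succ, Units.val_mul, pow_add]
            noncomm_ring
        _ = ((↑(t⁻¹ ^ m) : B) * l w) * (t : B) ^ n' := by rw [heq, mul_assoc]
        _ = l w' := heq'
  have K3 : ∀ (i j : ℕ) (b1 b2 : B),
      (∃ (n : ℕ) (z : A), z ∈ setPow (I : Set A) i ∧ b1 * (t : B) ^ n = l z) →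
      (∃ (n : ℕ) (z : A), z ∈ setPow (I : Set A) j ∧ b2 * (t : B) ^ n = l z) →
      (∃ (n : ℕ) (z : A), z ∈ setPow (I : Set A) (i + j) ∧ (b1 * b2) * (t : B) ^ n = l z) := by
    intro i j b1 b2 ⟨n1, z1, hz1, e1⟩ ⟨n2, z2, hz2, e2⟩
    have hb1 : b1 = l z1 * (↑(t⁻¹ ^ n1) : B) := by
      rw [inv_pow]
      refine (Units.eq_mul_inv_iff_mul_eq (t ^ n1)).mpr ?_
      rw [Units.val_pow_eq_pow_val]
      exact e1
    obtain ⟨m, w, hw, heq⟩ := K2 n1 j z2 hz2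
    refine ⟨n2 + m, z1 * w, setPow_mul_mem I hz1 hw, ?_⟩
    calc (b1 * b2) * (t : B) ^ (n2 + m)
        = b1 * (b2 * (t : B) ^ n2) * (t : B) ^ m := by
          rw [pow_add]; noncomm_ring
      _ = b1 * l z2 * (t : B) ^ m := by rw [e2]
      _ = l z1 * (((↑(t⁻¹ ^ n1) : B) * l z2) * (t : B) ^ m) := by
          rw [hb1]; noncomm_ring
      _ = l z1 * l w := by rw [heq]
      _ = l (z1 * w) := (map_mul _ _ _).symm
  have Knil : ∀ x : B,
      (∃ (n : ℕ) (z : A), z ∈ setPow (I : Set A) 1 ∧ x * (t : B) ^ n = l z) →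
      IsNilpotent x := by
    intro x hx
    have hk : ∀ k : ℕ, ∃ (n : ℕ) (z : A), z ∈ setPow (I : Set A) (k + 1) ∧
        x ^ (k + 1) * (t : B) ^ n = l z := by
      intro k
      induction k with
      | zero => simpa using hx
      | succ k ih =>
        have := K3 (k + 1) 1 (x ^ (k + 1)) x ih hx
        simpa [pow_succ] using this
    obtain ⟨n, z, hz, heq⟩ := hk N0
    have hzN : z ∈ setPow (I : Set A) N := hz
    rw [hN] at hzN
    have hz0 : z = 0 := by simpa using hzN
    refine ⟨N0 + 1, ?_⟩
    have h0 : x ^ (N0 + 1) * (t : B) ^ n = 0 := by rw [heq, hz0, map_zero]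
    have := (Units.mul_left_eq_zero (t ^ n)).mp (by
      rw [Units.val_pow_eq_pow_val]; exact h0)
    exact this
  have hLR : ∀ (b x y : B), x * b = 1 → b * y = 1 → IsUnit b := by
    intro b x y hx hy
    have hxy : x = y := by
      calc x = x * (b * y) := by rw [hy, mul_one]
        _ = (x * b) * y := by rw [mul_assoc]
        _ = y := by rw [hx, one_mul]
    exact ⟨⟨b, y, hy, by rw [← hxy]; exact hx⟩, rfl⟩
  intro a
  constructor
  · -- forward
    intro hu
    obtain ⟨c, n, hc⟩ := hfrac (↑hu.unit⁻¹ : B)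
    have hac : l (a * c) = l (s ^ n) := by
      rw [map_mul, ← hc, ← mul_assoc]
      rw [hu.mul_val_inv, one_mul]
    have h0 : l (a * c - s ^ n) = 0 := by rw [map_sub, hac, sub_self]
    obtain ⟨m, hm⟩ := (hlker _).mp h0
    have hA : a * c * s ^ m = s ^ (n + m) := by
      have := hm
      rw [sub_mul, sub_eq_zero] at this
      rw [this, pow_add]
    have hAbar : p a * (p c * p s ^ m) = p s ^ (n + m) := by
      have := congrArg p hA
      simpa [map_mul, map_pow, mul_assoc] using this
    have hL : algebraMap Abar L (p a) * algebraMap Abar L (p c * p s ^ m)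
        = (algebraMap Abar L (p s)) ^ (n + m) := by
      rw [← map_mul, hAbar, map_pow]
    exact isUnit_of_mul_isUnit_left
      (hL ▸ (IsLocalization.Away.algebraMap_isUnit (S := L) (p s)).pow (n + m))
  · -- backward
    intro hu
    obtain ⟨⟨d, r⟩, hsurj⟩ := IsLocalization.surj (M := Submonoid.powers (p s))
      (↑hu.unit⁻¹ : L)
    obtain ⟨n, hn⟩ := r.2
    have hmap : algebraMap Abar L (p a * d) = algebraMap Abar L (↑r : Abar) := by
      rw [map_mul]
      calc algebraMap Abar L (p a) * algebraMap Abar L d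
          = algebraMap Abar L (p a) * ((↑hu.unit⁻¹ : L) * algebraMap Abar L (↑r : Abar)) := by
            rw [hsurj]
        _ = (algebraMap Abar L (p a) * (↑hu.unit⁻¹ : L)) * algebraMap Abar L (↑r : Abar) := by
            rw [mul_assoc]
        _ = algebraMap Abar L (↑r : Abar) := by
            rw [hu.mul_val_inv, one_mul]
    obtain ⟨c0, hc0⟩ := (IsLocalization.eq_iff_exists (Submonoid.powers (p s)) L).mp hmap
    obtain ⟨m, hmq⟩ := c0.2
    obtain ⟨c, rfl⟩ := hpsurj d
    -- p s ^ m * (p a * p c) = p s ^ m * p s ^ n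
    have hA : p s ^ m * (p a * p c) = p s ^ m * p s ^ n := by
      have h1 := hc0
      rw [← hmq, ← hn] at h1
      exact h1
    set M := n + m with hMdef
    set z : A := a * (c * s ^ m) - s ^ M with hzdef
    have hz : p z = 0 := by
      rw [hzdef, map_sub, map_mul, map_mul, map_pow, map_pow]
      rw [hMdef]
      linear_combination hA
    have hz1 : z ∈ setPow (I : Set A) 1 := mem_setPow_one I ((hpker _).mp hz)
    set z' : A := (c * s ^ m) * a - s ^ M with hz'def
    have hz' : p z' = 0 := by
      rw [hz'def, map_sub, map_mul, map_mul, map_pow, map_pow]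
      rw [hMdef]
      linear_combination hA
    have hz'1 : z' ∈ setPow (I : Set A) 1 := mem_setPow_one I ((hpker _).mp hz')
    have hsum : l a * l (c * s ^ m) = (t : B) ^ M + l z := by
      rw [← map_mul, htp]
      rw [hzdef]
      rw [map_sub]
      abel
    have hsum' : l (c * s ^ m) * l a = (t : B) ^ M + l z' := by
      rw [← map_mul, htp]
      rw [hz'def]
      rw [map_sub]
      abel
    -- right inverse
    have hxJ : (l z * (↑((t ^ M)⁻¹) : B)) * (t : B) ^ M = l z := by
      rw [mul_assoc, ← Units.val_pow_eq_pow_val, Units.inv_mul, mul_one]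
    have hxnil : IsNilpotent (l z * (↑((t ^ M)⁻¹) : B)) :=
      Knil _ ⟨M, z, hz1, hxJ⟩
    have hxunit : IsUnit (1 + l z * (↑((t ^ M)⁻¹) : B)) := hxnil.isUnit_one_add
    have hright : l a * (l (c * s ^ m) * (↑((t ^ M)⁻¹) : B))
        = 1 + l z * (↑((t ^ M)⁻¹) : B) := by
      rw [← mul_assoc, hsum, add_mul, ← Units.val_pow_eq_pow_val, Units.mul_inv]
    -- left inverse
    have hx'nil : IsNilpotent ((↑((t ^ M)⁻¹) : B) * l z') := by
      obtain ⟨n', w, hw, heq⟩ := K2 M 1 z' hz'1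
      refine Knil _ ⟨n', w, hw, ?_⟩
      rw [inv_pow] at heq
      exact heq
    have hx'unit : IsUnit (1 + (↑((t ^ M)⁻¹) : B) * l z') := hx'nil.isUnit_one_add
    have hleft : ((↑((t ^ M)⁻¹) : B) * l (c * s ^ m)) * l a
        = 1 + (↑((t ^ M)⁻¹) : B) * l z' := by
      rw [mul_assoc, hsum', mul_add, ← Units.val_pow_eq_pow_val, Units.inv_mul]
    refine hLR (l a)
      ((↑hx'unit.unit⁻¹ : B) * ((↑((t ^ M)⁻¹) : B) * l (c * s ^ m)))
      ((l (c * s ^ m) * (↑((t ^ M)⁻¹) : B)) * (↑hxunit.unit⁻¹ : B)) ?_ ?_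
    · rw [mul_assoc, hleft]
      exact hx'unit.val_inv_mul
    · rw [← mul_assoc, hright]
      exact hxunit.mul_val_inv
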